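/- Let W : (0,∞) → ℝ be measurable with ∫₀^∞ r |W(r)|⁻ dr < ∞ (where W⁻ is the negative part), and let m > 1/2. Then the number of nonpositive eigenvalues of the Schrödinger operator −d²/dr² + m(m−1)/r² + W on L²(0,∞) (Dirichlet realization) is at most (2m−1)⁻¹ ∫₀^∞ r |W(r)| dr. -/

import Mathlib

open MeasureTheory Set Complex Filter

noncomputable section BargmannAux

namespace BargmannAux

/-- `phi m u r = u'(r) - (m/r) u(r)`. -/
def phi (m : ℝ) (u : ℝ → ℂ) : ℝ → ℂ := fun r => deriv u r - ((m / r : ℝ)) • u r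

/-- A smooth compactly supported function with support in `Ioi 0` vanishes
outside some `Icc a b` with `0 < a < b`. -/
lemma exists_bounds (u : ℝ → ℂ) (h2 : HasCompactSupport u) (h3 : tsupport u ⊆ Ioi 0) :
    ∃ a b : ℝ, 0 < a ∧ a < b ∧ ∀ r, r ∉ Icc a b → u r = 0 := by
  rcases eq_or_ne (tsupport u) ∅ with he | hne
  · exact ⟨1, 2, one_pos, one_lt_two, fun r _ =>
      image_eq_zero_of_notMem_tsupport (by simp [he])⟩
  · have hK : IsCompact (tsupport u) := h2
    have hbdd := hK.bddBelow
    have hbdd' := hK.bddAbove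
    have hne' : (tsupport u).Nonempty := nonempty_iff_ne_empty.2 hne
    have hmem : sInf (tsupport u) ∈ tsupport u := hK.sInf_mem hne'
    refine ⟨sInf (tsupport u), sSup (tsupport u) + 1, h3 hmem, ?_, ?_⟩
    · have : sInf (tsupport u) ≤ sSup (tsupport u) := csInf_le_csSup hne' hbdd hbdd'
      linarith
    · intro r hr
      apply image_eq_zero_of_notMem_tsupport
      intro hmem'
      exact hr ⟨csInf_le hbdd hmem', by
        have := le_csSup hbdd' hmem'; linarith⟩

lemma deriv_zero_out {u : ℝ → ℂ} {a b : ℝ} (hua : ∀ r, r ∉ Icc a b → u r = 0)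
    {r : ℝ} (hr : r ∉ Icc a b) : deriv u r = 0 := by
  have hopen : IsOpen (Icc a b)ᶜ := isClosed_Icc.isOpen_compl
  have : u =ᶠ[nhds r] fun _ => 0 :=
    eventually_of_mem (hopen.mem_nhds hr) (fun x hx => hua x hx)
  rw [this.deriv_eq]; simp

lemma phi_zero_out {m : ℝ} {u : ℝ → ℂ} {a b : ℝ} (hua : ∀ r, r ∉ Icc a b → u r = 0)
    {r : ℝ} (hr : r ∉ Icc a b) : phi m u r = 0 := by
  simp [phi, deriv_zero_out hua hr, hua r hr]

/-- continuity from: vanishing below `a>0` and continuity at positive points. -/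
lemma cont_aux {E : Type*} [NormedAddCommGroup E] {f : ℝ → E} {a : ℝ} (ha : 0 < a)
    (h0 : ∀ r ∈ Iio a, f r = 0) (hc : ∀ r ∈ Ioi (0:ℝ), ContinuousAt f r) :
    Continuous f := by
  rw [continuous_iff_continuousAt]
  intro x
  rcases lt_or_ge x a with h | h
  · have : f =ᶠ[nhds x] fun _ => 0 := eventually_of_mem (Iio_mem_nhds h) h0
    exact ContinuousAt.congr continuousAt_const this.symm
  · exact hc x (lt_of_lt_of_le ha h)

lemma phi_cont {m : ℝ} {u : ℝ → ℂ} (hu : ContDiff ℝ (⊤ : ℕ∞) u) {a b : ℝ} (ha : 0 < a)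
    (hua : ∀ r, r ∉ Icc a b → u r = 0) : Continuous (phi m u) := by
  apply cont_aux ha
  · intro r hr
    exact phi_zero_out hua (by intro h; exact absurd h.1 (not_le.2 hr))
  · intro r hr
    have h1 : ContinuousAt (deriv u) r := (hu.continuous_deriv (by simp)).continuousAt
    have h2 : ContinuousAt (fun s : ℝ => ((m / s : ℝ)) • u s) r := by
      have hr' : (r : ℝ) ≠ 0 := ne_of_gt hr
      exact ((continuousAt_const.div continuousAt_id hr')).smul
        hu.continuous.continuousAt
    exact h1.sub h2


lemma normsq_hasDeriv {u : ℝ → ℂ} (hu : ContDiff ℝ (⊤ : ℕ∞) u) (r : ℝ) :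
    HasDerivAt (fun s => ‖u s‖ ^ 2) (2 * ((starRingEnd ℂ) (u r) * deriv u r).re) r := by
  have hd : HasDerivAt u (deriv u r) r :=
    (hu.differentiable (by simp) r).hasDerivAt
  have hre : HasDerivAt (fun s => (u s).re) ((deriv u r).re) r :=
    (Complex.reCLM.hasFDerivAt.comp_hasDerivAt r hd)
  have him : HasDerivAt (fun s => (u s).im) ((deriv u r).im) r :=
    (Complex.imCLM.hasFDerivAt.comp_hasDerivAt r hd)
  have h1 : HasDerivAt (fun s => (u s).re ^ 2 + (u s).im ^ 2)
      (2 * (u r).re * (deriv u r).re + 2 * (u r).im * (deriv u r).im) r := by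
    have := ((hre.pow 2).add (him.pow 2))
    exact this.congr_deriv (by ring)
  have heq : (fun s => ‖u s‖ ^ 2) = fun s => (u s).re ^ 2 + (u s).im ^ 2 := by
    funext s
    rw [← Complex.normSq_eq_norm_sq, Complex.normSq_apply]
    ring
  rw [heq]
  convert h1 using 1
  simp [Complex.mul_re, Complex.conj_re, Complex.conj_im]
  ring

/-- the integrand whose integral over `(0,∞)` vanishes by compact support. -/
def G (m : ℝ) (u : ℝ → ℂ) : ℝ → ℝ :=
  fun r => 2 * (m / r) * ((starRingEnd ℂ) (u r) * deriv u r).re - (m / r ^ 2) * ‖u r‖ ^ 2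

lemma hasDerivAt_F {m : ℝ} {u : ℝ → ℂ} (hu : ContDiff ℝ (⊤ : ℕ∞) u) {r : ℝ} (hr : 0 < r) :
    HasDerivAt (fun s => (m / s) * ‖u s‖ ^ 2) (G m u r) r := by
  have h1 : HasDerivAt (fun s : ℝ => m / s) (-(m / r ^ 2)) r := by
    have h := (hasDerivAt_inv hr.ne').const_mul m
    have : (fun s : ℝ => m * s⁻¹) = fun s : ℝ => m / s := by
      funext s; rw [div_eq_mul_inv]
    rw [this] at h
    exact h.congr_deriv (by ring)
  have h2 := h1.mul (normsq_hasDeriv hu r)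
  refine h2.congr_deriv ?_
  simp only [G]
  ring

lemma G_zero_out {m : ℝ} {u : ℝ → ℂ} {a b : ℝ} (hua : ∀ r, r ∉ Icc a b → u r = 0)
    {r : ℝ} (hr : r ∉ Icc a b) : G m u r = 0 := by
  simp [G, hua r hr, deriv_zero_out hua hr]

lemma G_cont {m : ℝ} {u : ℝ → ℂ} (hu : ContDiff ℝ (⊤ : ℕ∞) u) {a b : ℝ} (ha : 0 < a)
    (hua : ∀ r, r ∉ Icc a b → u r = 0) : Continuous (G m u) := by
  apply cont_aux ha
  · intro r hr
    exact G_zero_out hua (fun h => absurd h.1 (not_le.2 hr))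
  · intro r hr
    have hr' : (r : ℝ) ≠ 0 := ne_of_gt hr
    have hc1 : ContinuousAt (fun s : ℝ => m / s) r :=
      continuousAt_const.div continuousAt_id hr'
    have hc2 : ContinuousAt (fun s : ℝ => m / s ^ 2) r :=
      continuousAt_const.div (continuousAt_id.pow 2) (pow_ne_zero 2 hr')
    have hcu : Continuous fun s => ((starRingEnd ℂ) (u s) * deriv u s).re :=
      (Complex.continuous_re.comp
        ((Complex.continuous_conj.comp hu.continuous).mul (hu.continuous_deriv (by simp))))
    have hcn : Continuous fun s => ‖u s‖ ^ 2 := (hu.continuous.norm.pow 2)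
    exact (((continuousAt_const.mul hc1).mul hcu.continuousAt).sub
      (hc2.mul hcn.continuousAt))

lemma integrable_out {E : Type*} [NormedAddCommGroup E] {f : ℝ → E} (hf : Continuous f) {a b : ℝ}
    (h : ∀ r, r ∉ Icc a b → f r = 0) : IntegrableOn f (Ioi 0) :=
  (hf.integrable_of_hasCompactSupport (HasCompactSupport.intro isCompact_Icc h)).integrableOn

lemma G_integral_zero {m : ℝ} {u : ℝ → ℂ} (hu : ContDiff ℝ (⊤ : ℕ∞) u) {a b : ℝ} (ha : 0 < a)
    (hab : a < b) (hua : ∀ r, r ∉ Icc a b → u r = 0) :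
    ∫ r in Ioi (0:ℝ), G m u r = 0 := by
  have hcont := G_cont (m := m) hu ha hua
  have h0 : ∀ x, x ∉ Ioi (0:ℝ) → G m u x = 0 := by
    intro x hx
    exact G_zero_out hua (fun h => hx (lt_of_lt_of_le ha h.1))
  have h1 : ∀ x, x ∉ Ioc (a/2) (b+1) → G m u x = 0 := by
    intro x hx
    apply G_zero_out hua
    intro h
    exact hx ⟨by linarith [h.1], by linarith [h.2]⟩
  rw [setIntegral_eq_integral_of_forall_compl_eq_zero h0,
    ← setIntegral_eq_integral_of_forall_compl_eq_zero h1,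
    ← intervalIntegral.integral_of_le (by linarith : a/2 ≤ b+1)]
  have hd : ∀ x ∈ uIcc (a/2) (b+1), HasDerivAt (fun s => (m / s) * ‖u s‖ ^ 2) (G m u x) x := by
    intro x hx
    rw [uIcc_of_le (by linarith : a/2 ≤ b+1)] at hx
    exact hasDerivAt_F hu (by linarith [hx.1] : (0:ℝ) < x)
  rw [intervalIntegral.integral_eq_sub_of_hasDerivAt hd (hcont.intervalIntegrable _ _)]
  have e1 : u (b+1) = 0 := hua _ (fun h => by linarith [h.2])
  have e2 : u (a/2) = 0 := hua _ (fun h => by linarith [h.1])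
  simp [e1, e2]

lemma pointwise_ibp {m : ℝ} {u : ℝ → ℂ} {r : ℝ} (hr : 0 < r) :
    ‖phi m u r‖ ^ 2
      = (‖deriv u r‖ ^ 2 + (m * (m - 1) / r ^ 2) * ‖u r‖ ^ 2) - G m u r := by
  have hnormsq : ∀ z : ℂ, ‖z‖ ^ 2 = Complex.normSq z := by
    intro z
    rw [← Complex.normSq_eq_norm_sq]
  have hsmul : ((m / r : ℝ)) • u r = ((m / r : ℝ) : ℂ) * u r := Complex.real_smul
  rw [phi]
  simp only [hnormsq, hsmul]
  rw [Complex.normSq_sub]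
  rw [Complex.normSq_mul, Complex.normSq_ofReal]
  have hconj : (starRingEnd ℂ) (((m / r : ℝ) : ℂ) * u r)
      = ((m / r : ℝ) : ℂ) * (starRingEnd ℂ) (u r) := by
    rw [map_mul, Complex.conj_ofReal]
  rw [hconj]
  have hre : (deriv u r * (((m / r : ℝ) : ℂ) * (starRingEnd ℂ) (u r))).re
      = (m / r) * ((starRingEnd ℂ) (u r) * deriv u r).re := by
    rw [show deriv u r * (((m / r : ℝ) : ℂ) * (starRingEnd ℂ) (u r))
        = ((m / r : ℝ) : ℂ) * ((starRingEnd ℂ) (u r) * deriv u r) by ring]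
    exact Complex.re_ofReal_mul _ _
  rw [hre, G]
  simp only [hnormsq]
  have hr' : (r:ℝ) ≠ 0 := ne_of_gt hr
  field_simp
  ring

lemma A_integrable {m : ℝ} {u : ℝ → ℂ} (hu : ContDiff ℝ (⊤ : ℕ∞) u) {a b : ℝ} (ha : 0 < a)
    (hua : ∀ r, r ∉ Icc a b → u r = 0) :
    IntegrableOn (fun r => ‖deriv u r‖ ^ 2 + (m * (m - 1) / r ^ 2) * ‖u r‖ ^ 2)
      (Ioi 0) := by
  apply integrable_out (a := a) (b := b)
  · apply cont_aux ha
    · intro r hr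
      have h : r ∉ Icc a b := fun h => absurd h.1 (not_le.2 hr)
      simp [hua r h, deriv_zero_out hua h]
    · intro r hr
      have hr' : (r : ℝ) ≠ 0 := ne_of_gt hr
      exact (((hu.continuous_deriv (by simp)).norm.pow 2).continuousAt).add
        (((continuousAt_const.div (continuousAt_id.pow 2) (pow_ne_zero 2 hr'))).mul
          ((hu.continuous.norm.pow 2).continuousAt))
  · intro r hr
    simp [hua r hr, deriv_zero_out hua hr]

lemma ibp {m : ℝ} {u : ℝ → ℂ} (hu : ContDiff ℝ (⊤ : ℕ∞) u) {a b : ℝ} (ha : 0 < a)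
    (hab : a < b) (hua : ∀ r, r ∉ Icc a b → u r = 0) :
    ∫ r in Ioi (0:ℝ), ‖phi m u r‖ ^ 2
      = ∫ r in Ioi (0:ℝ), (‖deriv u r‖ ^ 2 + (m * (m - 1) / r ^ 2) * ‖u r‖ ^ 2) := by
  have hA := A_integrable (m := m) hu ha hua
  have hG : IntegrableOn (G m u) (Ioi 0) :=
    integrable_out (G_cont hu ha hua) (fun r hr => G_zero_out hua hr)
  calc ∫ r in Ioi (0:ℝ), ‖phi m u r‖ ^ 2
      = ∫ r in Ioi (0:ℝ),
          ((‖deriv u r‖ ^ 2 + (m * (m - 1) / r ^ 2) * ‖u r‖ ^ 2) - G m u r) := by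
        apply setIntegral_congr_fun measurableSet_Ioi
        intro r hr
        exact pointwise_ibp hr
    _ = (∫ r in Ioi (0:ℝ), (‖deriv u r‖ ^ 2 + (m * (m - 1) / r ^ 2) * ‖u r‖ ^ 2))
          - ∫ r in Ioi (0:ℝ), G m u r := integral_sub hA hG
    _ = _ := by rw [G_integral_zero hu ha hab hua, sub_zero]

lemma phi_sq_integrable {m : ℝ} {u : ℝ → ℂ} (hu : ContDiff ℝ (⊤ : ℕ∞) u) {a b : ℝ} (ha : 0 < a)
    (hua : ∀ r, r ∉ Icc a b → u r = 0) :
    IntegrableOn (fun s => ‖phi m u s‖ ^ 2) (Ioi 0) := by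
  apply integrable_out (a := a) (b := b) ((phi_cont hu ha hua).norm.pow 2)
  intro r hr
  simp [phi_zero_out hua hr]

lemma pointwise_bound {m : ℝ} (hm : 1/2 < m) {u : ℝ → ℂ} (hu : ContDiff ℝ (⊤ : ℕ∞) u)
    {a b : ℝ} (ha : 0 < a) (hab : a < b) (hua : ∀ r, r ∉ Icc a b → u r = 0)
    {r : ℝ} (hr : 0 < r) :
    ‖u r‖ ^ 2 ≤ (r / (2*m - 1)) * ∫ s in Ioi (0:ℝ), ‖phi m u s‖ ^ 2 := by
  set T := ∫ s in Ioi (0:ℝ), ‖phi m u s‖ ^ 2 with hT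
  have h2m : (0:ℝ) < 2*m - 1 := by linarith
  have hT0 : 0 ≤ T := setIntegral_nonneg measurableSet_Ioi (fun x _ => sq_nonneg _)
  have hphiInt : IntegrableOn (fun s => ‖phi m u s‖ ^ 2) (Ioi 0) :=
    phi_sq_integrable hu ha hua
  set c := b + 1 + r with hc
  have hrc : r ≤ c := by dsimp [c]; linarith
  have hbc : b < c := by dsimp [c]; linarith
  set v : ℝ → ℂ := fun s => ((s ^ (-m) : ℝ)) • u s with hv
  -- FTC
  have hderiv : ∀ x ∈ uIcc r c, HasDerivAt v (((x ^ (-m) : ℝ)) • phi m u x) x := by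
    intro x hx
    rw [uIcc_of_le hrc] at hx
    have hx0 : (0:ℝ) < x := lt_of_lt_of_le hr hx.1
    have h1 : HasDerivAt (fun s : ℝ => s ^ (-m)) (-m * x ^ (-m - 1)) x :=
      Real.hasDerivAt_rpow_const (Or.inl hx0.ne')
    have h2 : HasDerivAt u (deriv u x) x := (hu.differentiable (by simp) x).hasDerivAt
    have h3 := h1.smul h2
    refine h3.congr_deriv ?_
    rw [phi]
    rw [smul_sub, smul_smul]
    have : (x ^ (-m) : ℝ) * (m / x) = m * x ^ (-m - 1) := by
      rw [Real.rpow_sub_one hx0.ne']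
      field_simp
    rw [this]
    module
  have hcont_w : ContinuousOn (fun x => ((x ^ (-m) : ℝ)) • phi m u x) (uIcc r c) := by
    intro x hx
    rw [uIcc_of_le hrc] at hx
    have hx0 : (0:ℝ) < x := lt_of_lt_of_le hr hx.1
    exact (((Real.continuousAt_rpow_const x (-m) (Or.inl hx0.ne')).smul
      (phi_cont hu ha hua).continuousAt)).continuousWithinAt
  have hftc := intervalIntegral.integral_eq_sub_of_hasDerivAt hderiv
    (hcont_w.intervalIntegrable)
  have hvc : v c = 0 := by
    rw [hv]
    simp [hua c (fun h => absurd h.2 (not_le.2 hbc))]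
  have hvr : v r = - ∫ x in r..c, ((x ^ (-m) : ℝ)) • phi m u x := by
    rw [hftc, hvc]; ring
  -- bound the norm of v r
  have hnv : ‖v r‖ ≤ ∫ x in Ioc r c, (x ^ (-m) : ℝ) * ‖phi m u x‖ := by
    rw [hvr, norm_neg]
    refine le_trans (intervalIntegral.norm_integral_le_integral_norm_uIoc) ?_
    rw [uIoc_of_le hrc]
    apply le_of_eq
    apply setIntegral_congr_fun measurableSet_Ioc
    intro x hx
    have hx0 : (0:ℝ) < x := lt_of_lt_of_le hr (le_of_lt hx.1)
    show ‖(x ^ (-m) : ℝ) • phi m u x‖ = (x ^ (-m) : ℝ) * ‖phi m u x‖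
    rw [norm_smul, Real.norm_eq_abs, _root_.abs_of_nonneg (Real.rpow_nonneg hx0.le _)]
  -- Cauchy-Schwarz
  have hCS : ∫ x in Ioc r c, (x ^ (-m) : ℝ) * ‖phi m u x‖
      ≤ (∫ x in Ioc r c, ((x ^ (-m) : ℝ)) ^ (2:ℝ)) ^ ((1:ℝ)/2)
        * (∫ x in Ioc r c, ‖phi m u x‖ ^ (2:ℝ)) ^ ((1:ℝ)/2) := by
    have hpq : Real.HolderConjugate 2 2 := Real.HolderConjugate.two_two
    have hmeas1 : AEStronglyMeasurable (fun x : ℝ => (x ^ (-m) : ℝ))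
        (volume.restrict (Ioc r c)) := by
      apply ContinuousOn.aestronglyMeasurable ?_ measurableSet_Ioc
      intro x hx
      have hx0 : (0:ℝ) < x := lt_of_lt_of_le hr (le_of_lt hx.1)
      exact (Real.continuousAt_rpow_const x (-m) (Or.inl hx0.ne')).continuousWithinAt
    have hint1 : Integrable (fun x : ℝ => ((x ^ (-m) : ℝ)) ^ (2:ℕ))
        (volume.restrict (Ioc r c)) := by
      apply (ContinuousOn.integrableOn_Icc ?_).mono_set Ioc_subset_Icc_self
      intro x hx
      have hx0 : (0:ℝ) < x := lt_of_lt_of_le hr hx.1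
      exact ((Real.continuousAt_rpow_const x (-m) (Or.inl hx0.ne')).pow 2).continuousWithinAt
    have hf : MemLp (fun x : ℝ => (x ^ (-m) : ℝ)) (ENNReal.ofReal 2)
        (volume.restrict (Ioc r c)) := by
      rw [show ENNReal.ofReal (2:ℝ) = 2 by norm_num]
      rw [memLp_two_iff_integrable_sq hmeas1]
      simpa [pow_two] using hint1
    have hmeas2 : AEStronglyMeasurable (fun x : ℝ => ‖phi m u x‖)
        (volume.restrict (Ioc r c)) := ((phi_cont hu ha hua).norm).aestronglyMeasurable
    have hg : MemLp (fun x : ℝ => ‖phi m u x‖) (ENNReal.ofReal 2)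
        (volume.restrict (Ioc r c)) := by
      rw [show ENNReal.ofReal (2:ℝ) = 2 by norm_num]
      rw [memLp_two_iff_integrable_sq hmeas2]
      exact (((phi_cont hu ha hua).norm.pow 2).integrableOn_Ioc)
    have hnn : 0 ≤ᵐ[volume.restrict (Ioc r c)] (fun x : ℝ => (x ^ (-m) : ℝ)) :=
      (ae_restrict_mem measurableSet_Ioc).mono
        (fun x hx => Real.rpow_nonneg (le_of_lt (lt_trans hr hx.1)) _)
    have := integral_mul_le_Lp_mul_Lq_of_nonneg hpq hnn
      (Eventually.of_forall (fun x => norm_nonneg _)) hf hg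
    simpa using this
  -- bound the two factors
  have hX : ∫ x in Ioc r c, ((x ^ (-m) : ℝ)) ^ (2:ℝ) ≤ r ^ (1 - 2*m) / (2*m - 1) := by
    have hlt : (-(2*m) : ℝ) < -1 := by linarith
    have heq : ∫ x in Ioc r c, ((x ^ (-m) : ℝ)) ^ (2:ℝ)
        = ∫ x in Ioc r c, (x ^ (-(2*m)) : ℝ) := by
      apply setIntegral_congr_fun measurableSet_Ioc
      intro x hx
      have hx0 : (0:ℝ) < x := lt_of_lt_of_le hr (le_of_lt hx.1)
      show ((x ^ (-m) : ℝ)) ^ (2:ℝ) = (x ^ (-(2*m)) : ℝ)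
      rw [← Real.rpow_mul hx0.le]
      ring_nf
    rw [heq]
    have hmono : ∫ x in Ioc r c, (x ^ (-(2*m)) : ℝ) ≤ ∫ x in Ioi r, (x ^ (-(2*m)) : ℝ) := by
      apply setIntegral_mono_set (integrableOn_Ioi_rpow_of_lt hlt hr)
      · exact (ae_restrict_mem measurableSet_Ioi).mono
          (fun x hx => Real.rpow_nonneg (le_of_lt (lt_trans hr hx)) _)
      · exact Eventually.of_forall (fun x hx => hx.1)
    refine hmono.trans ?_
    rw [integral_Ioi_rpow_of_lt hlt hr]
    apply le_of_eq
    rw [div_eq_div_iff (by linarith) (by linarith)]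
    ring_nf
  have hY : ∫ x in Ioc r c, ‖phi m u x‖ ^ (2:ℝ) ≤ T := by
    have heq : ∫ x in Ioc r c, ‖phi m u x‖ ^ (2:ℝ)
        = ∫ x in Ioc r c, ‖phi m u x‖ ^ (2:ℕ) := by
      apply setIntegral_congr_fun measurableSet_Ioc
      intro x _
      show ‖phi m u x‖ ^ (2:ℝ) = ‖phi m u x‖ ^ (2:ℕ)
      norm_cast
    rw [heq, hT]
    apply setIntegral_mono_set hphiInt
    · exact Eventually.of_forall (fun x => sq_nonneg _)
    · exact Eventually.of_forall (fun x hx => lt_of_lt_of_le hr (le_of_lt hx.1))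
  -- combine
  have hXnn : (0:ℝ) ≤ ∫ x in Ioc r c, ((x ^ (-m) : ℝ)) ^ (2:ℝ) := by
    apply setIntegral_nonneg measurableSet_Ioc
    intro x hx
    exact Real.rpow_nonneg (Real.rpow_nonneg (le_of_lt (lt_of_lt_of_le hr (le_of_lt hx.1))) _) _
  have hYnn : (0:ℝ) ≤ ∫ x in Ioc r c, ‖phi m u x‖ ^ (2:ℝ) := by
    apply setIntegral_nonneg measurableSet_Ioc
    intro x hx
    exact Real.rpow_nonneg (norm_nonneg _) _
  have hvbound : ‖v r‖ ^ 2 ≤ (r ^ (1 - 2*m) / (2*m - 1)) * T := by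
    have h1 : ‖v r‖ ≤ (∫ x in Ioc r c, ((x ^ (-m) : ℝ)) ^ (2:ℝ)) ^ ((1:ℝ)/2)
        * (∫ x in Ioc r c, ‖phi m u x‖ ^ (2:ℝ)) ^ ((1:ℝ)/2) := hnv.trans hCS
    have h2 : ‖v r‖ ^ 2 ≤ ((∫ x in Ioc r c, ((x ^ (-m) : ℝ)) ^ (2:ℝ)) ^ ((1:ℝ)/2)
        * (∫ x in Ioc r c, ‖phi m u x‖ ^ (2:ℝ)) ^ ((1:ℝ)/2)) ^ 2 :=
      pow_le_pow_left₀ (norm_nonneg _) h1 2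
    refine h2.trans ?_
    have e1 : ((∫ x in Ioc r c, ((x ^ (-m) : ℝ)) ^ (2:ℝ)) ^ ((1:ℝ)/2)) ^ (2:ℕ)
        = ∫ x in Ioc r c, ((x ^ (-m) : ℝ)) ^ (2:ℝ) := by
      rw [← Real.rpow_natCast (_ ^ ((1:ℝ)/2)) 2, ← Real.rpow_mul hXnn]
      norm_num
    have e2 : ((∫ x in Ioc r c, ‖phi m u x‖ ^ (2:ℝ)) ^ ((1:ℝ)/2)) ^ (2:ℕ)
        = ∫ x in Ioc r c, ‖phi m u x‖ ^ (2:ℝ) := by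
      rw [← Real.rpow_natCast (_ ^ ((1:ℝ)/2)) 2, ← Real.rpow_mul hYnn]
      norm_num
    rw [mul_pow, e1, e2]
    exact mul_le_mul hX hY hYnn (by positivity)
  -- transfer to u
  have hur : ‖u r‖ ^ 2 = (r ^ m : ℝ) ^ 2 * ‖v r‖ ^ 2 := by
    have : u r = (r ^ m : ℝ) • v r := by
      rw [hv]
      show u r = (r ^ m : ℝ) • ((r ^ (-m) : ℝ) • u r)
      rw [smul_smul, ← Real.rpow_add hr]
      simp
    rw [this, norm_smul, Real.norm_eq_abs, _root_.abs_of_nonneg (Real.rpow_nonneg hr.le _),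
      mul_pow]
  rw [hur]
  calc (r ^ m : ℝ) ^ 2 * ‖v r‖ ^ 2 ≤ (r ^ m : ℝ) ^ 2 * ((r ^ (1 - 2*m) / (2*m - 1)) * T) := by
        apply mul_le_mul_of_nonneg_left hvbound (sq_nonneg _)
    _ = ((r ^ m : ℝ) ^ 2 * r ^ (1 - 2*m)) * T / (2*m - 1) := by ring
    _ = (r / (2*m - 1)) * T := by
        have hp : (r ^ m : ℝ) ^ 2 * r ^ (1 - 2*m) = r := by
          rw [← Real.rpow_natCast (r ^ m : ℝ) 2, ← Real.rpow_mul hr.le, ← Real.rpow_add hr]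
          norm_num
          rw [show m*2 + (1-2*m) = 1 by ring, Real.rpow_one]
        rw [hp]
        ring

lemma V_norm_integrable {W : ℝ → ℝ} (hW : IntegrableOn (fun r => r * |W r|) (Ioi 0))
    {V : ℝ → ℝ} (hVmeas : Measurable V) (hVW : ∀ r, |V r| ≤ |W r|)
    {m : ℝ} (hm : 1/2 < m) {u : ℝ → ℂ} (hu : ContDiff ℝ (⊤ : ℕ∞) u)
    {a b : ℝ} (ha : 0 < a) (hab : a < b) (hua : ∀ r, r ∉ Icc a b → u r = 0) :
    IntegrableOn (fun r => V r * ‖u r‖ ^ 2) (Ioi 0) := by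
  set T := ∫ s in Ioi (0:ℝ), ‖phi m u s‖ ^ 2 with hT
  have h2m : (0:ℝ) < 2*m - 1 := by linarith
  have hT0 : 0 ≤ T := setIntegral_nonneg measurableSet_Ioi (fun x _ => sq_nonneg _)
  set C := T / (2*m - 1) with hC
  have hC0 : 0 ≤ C := div_nonneg hT0 (by linarith)
  apply Integrable.mono (hW.const_mul C)
  · exact ((hVmeas.mul ((hu.continuous.norm.pow 2).measurable)).aestronglyMeasurable)
  · refine (ae_restrict_mem measurableSet_Ioi).mono (fun r hr => ?_)
    have hr0 : (0:ℝ) < r := hr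
    have hb : ‖u r‖ ^ 2 ≤ (r / (2*m - 1)) * T := pointwise_bound hm hu ha hab hua hr0
    have : |V r * ‖u r‖ ^ 2| ≤ |W r| * ((r / (2*m - 1)) * T) := by
      rw [abs_mul, _root_.abs_of_nonneg (sq_nonneg (‖u r‖))]
      exact mul_le_mul (hVW r) hb (sq_nonneg _) (abs_nonneg _)
    refine le_trans this (le_of_eq ?_)
    rw [Real.norm_eq_abs, abs_mul, _root_.abs_of_nonneg hC0,
      _root_.abs_of_nonneg (mul_nonneg hr0.le (abs_nonneg _)), hC]
    have hne : (2*m-1) ≠ 0 := ne_of_gt h2m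
    field_simp

lemma form_bound {W : ℝ → ℝ} (hW : IntegrableOn (fun r => r * |W r|) (Ioi 0))
    (hWmeas : Measurable W)
    {m : ℝ} (hm : 1/2 < m) {u : ℝ → ℂ} (hu : ContDiff ℝ (⊤ : ℕ∞) u)
    {a b : ℝ} (ha : 0 < a) (hab : a < b) (hua : ∀ r, r ∉ Icc a b → u r = 0)
    (hneg_u : (∫ r in Ioi (0:ℝ),
        (‖deriv u r‖ ^ 2 + (m * (m - 1) / r ^ 2) * ‖u r‖ ^ 2 + W r * ‖u r‖ ^ 2)) ≤ 0) :
    ∫ s in Ioi (0:ℝ), ‖phi m u s‖ ^ 2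
      ≤ ∫ r in Ioi (0:ℝ), (max (-W r) 0) * ‖u r‖ ^ 2 := by
  have hA := A_integrable (m := m) hu ha hua
  have hWu : IntegrableOn (fun r => W r * ‖u r‖ ^ 2) (Ioi 0) :=
    V_norm_integrable hW hWmeas (fun r => le_refl _) hm hu ha hab hua
  have hWmu : IntegrableOn (fun r => (max (-W r) 0) * ‖u r‖ ^ 2) (Ioi 0) :=
    V_norm_integrable hW (hWmeas.neg.max measurable_const)
      (fun r => by
        show |max (-W r) 0| ≤ |W r|
        rw [_root_.abs_of_nonneg (le_max_right (-W r) 0)]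
        rcases le_or_gt (W r) 0 with h | h
        · rw [max_eq_left (by linarith), abs_of_nonpos h]
        · rw [max_eq_right (by linarith)]
          exact abs_nonneg _) hm hu ha hab hua
  have hsplit : (∫ r in Ioi (0:ℝ),
      (‖deriv u r‖ ^ 2 + (m * (m - 1) / r ^ 2) * ‖u r‖ ^ 2 + W r * ‖u r‖ ^ 2))
      = (∫ r in Ioi (0:ℝ), (‖deriv u r‖ ^ 2 + (m * (m - 1) / r ^ 2) * ‖u r‖ ^ 2))
        + ∫ r in Ioi (0:ℝ), W r * ‖u r‖ ^ 2 := integral_add hA hWu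
  rw [ibp hu ha hab hua]
  rw [hsplit] at hneg_u
  have h1 : (∫ r in Ioi (0:ℝ), (‖deriv u r‖ ^ 2 + (m * (m - 1) / r ^ 2) * ‖u r‖ ^ 2))
      ≤ ∫ r in Ioi (0:ℝ), -(W r * ‖u r‖ ^ 2) := by
    rw [integral_neg]
    linarith
  refine h1.trans (integral_mono hWu.neg hWmu (fun r => ?_))
  show -(W r * ‖u r‖ ^ 2) ≤ (max (-W r) 0) * ‖u r‖ ^ 2
  rw [neg_mul_eq_neg_mul]
  exact mul_le_mul_of_nonneg_right (le_max_left _ _) (sq_nonneg _)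

end BargmannAux


open BargmannAux in
/-- generalized Bargmann bound: Let `W` be measurable with
`∫₀^∞ r |W(r)| dr < ∞` and `m > 1/2`. The number of nonpositive eigenvalues of
the half-line Schrödinger operator `−d²/dr² + m(m−1)/r² + W` is at most
`(2m−1)⁻¹ ∫₀^∞ r |W(r)| dr`; variationally: any finite-dimensional space of
smooth test functions compactly supported in `(0,∞)` on which the quadratic
form `∫ |u'|² + (m(m−1)/r²)|u|² + W|u|²` is nonpositive has dimension at most
this bound. -/
theorem stmt13 (W : ℝ → ℝ) (hWmeas : Measurable W) (m : ℝ) (hm : 1 / 2 < m)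
    (hWneg : IntegrableOn (fun r => r * max (-W r) 0) (Set.Ioi 0))
    (hW : IntegrableOn (fun r => r * |W r|) (Set.Ioi 0))
    (S : Submodule ℂ (ℝ → ℂ)) [FiniteDimensional ℂ S]
    (hreg : ∀ u ∈ S, ContDiff ℝ (⊤ : ℕ∞) u ∧ HasCompactSupport u ∧ tsupport u ⊆ Set.Ioi 0)
    (hneg : ∀ u ∈ S, u ≠ 0 →
      (∫ r in Set.Ioi (0:ℝ),
        (‖deriv u r‖ ^ 2 + (m * (m - 1) / r ^ 2) * ‖u r‖ ^ 2 + W r * ‖u r‖ ^ 2)) ≤ 0) :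
    (Module.finrank ℂ S : ℝ) ≤ (2 * m - 1)⁻¹ * ∫ r in Set.Ioi (0:ℝ), r * |W r| := by
  classical
  have h2m : (0:ℝ) < 2 * m - 1 := by linarith
  -- regularity facts for elements of S
  have hsm : ∀ x : S, ContDiff ℝ (⊤ : ℕ∞) ((x : ℝ → ℂ)) := fun x => (hreg x x.2).1
  have hbnd : ∀ x : S, ∃ a b : ℝ, 0 < a ∧ a < b ∧ ∀ r, r ∉ Icc a b → (x : ℝ → ℂ) r = 0 :=
    fun x => exists_bounds _ (hreg x x.2).2.1 (hreg x x.2).2.2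
  -- the quadratic form
  set T : S → ℝ := fun x => ∫ s in Ioi (0:ℝ), ‖phi m (x : ℝ → ℂ) s‖ ^ 2 with hTdef
  have hT0 : ∀ x : S, 0 ≤ T x :=
    fun x => setIntegral_nonneg measurableSet_Ioi (fun r _ => sq_nonneg _)
  -- linearity of phi on S
  have hphi_add : ∀ x y : S, ∀ r : ℝ,
      phi m ((x + y : S) : ℝ → ℂ) r = phi m (x : ℝ → ℂ) r + phi m (y : ℝ → ℂ) r := by
    intro x y r
    have hx : DifferentiableAt ℝ (x : ℝ → ℂ) r := (hsm x).differentiable (by simp) r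
    have hy : DifferentiableAt ℝ (y : ℝ → ℂ) r := (hsm y).differentiable (by simp) r
    have hd : deriv ((x + y : S) : ℝ → ℂ) r = deriv (x : ℝ → ℂ) r + deriv (y : ℝ → ℂ) r := by
      have h1 : ((x + y : S) : ℝ → ℂ) = fun s => (x : ℝ → ℂ) s + (y : ℝ → ℂ) s := rfl
      rw [h1, deriv_fun_add hx hy]
    have hcoe : ∀ s, ((x + y : S) : ℝ → ℂ) s = (x : ℝ → ℂ) s + (y : ℝ → ℂ) s := fun s => rfl
    simp only [phi, hd, hcoe, smul_add]
    ring
  have hphi_smul : ∀ (c : ℂ) (x : S), ∀ r : ℝ,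
      phi m ((c • x : S) : ℝ → ℂ) r = c • phi m (x : ℝ → ℂ) r := by
    intro c x r
    have hx : DifferentiableAt ℝ (x : ℝ → ℂ) r := (hsm x).differentiable (by simp) r
    have hd : deriv ((c • x : S) : ℝ → ℂ) r = c • deriv (x : ℝ → ℂ) r := by
      have h1 : ((c • x : S) : ℝ → ℂ) = fun s => c • (x : ℝ → ℂ) s := rfl
      rw [h1, deriv_fun_const_smul c hx]
    have hcoe : ∀ s, ((c • x : S) : ℝ → ℂ) s = c • (x : ℝ → ℂ) s := fun s => rfl
    simp only [phi, hd, hcoe]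
    rw [smul_comm ((m / r : ℝ)) c ((x : ℝ → ℂ) r), smul_sub]
  -- integrability of inner products
  have hinnInt : ∀ x y : S,
      IntegrableOn (fun r => (starRingEnd ℂ) (phi m (x : ℝ → ℂ) r) * phi m (y : ℝ → ℂ) r)
        (Ioi 0) := by
    intro x y
    obtain ⟨ax, bx, hax, habx, huax⟩ := hbnd x
    obtain ⟨ay, by', hay, haby, huay⟩ := hbnd y
    apply integrable_out (a := ax) (b := bx)
    · exact ((Complex.continuous_conj.comp (phi_cont (hsm x) hax huax)).mul
        (phi_cont (hsm y) hay huay))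
    · intro r hr
      simp [phi_zero_out huax hr]
  -- inner x x is the (real, nonneg) quadratic form
  have hinn_self : ∀ x : S,
      (∫ r in Ioi (0:ℝ), (starRingEnd ℂ) (phi m (x : ℝ → ℂ) r) * phi m (x : ℝ → ℂ) r)
        = ((T x : ℝ) : ℂ) := by
    intro x
    have h1 : ((T x : ℝ) : ℂ) = ∫ s in Ioi (0:ℝ), ((‖phi m (x : ℝ → ℂ) s‖ ^ 2 : ℝ) : ℂ) :=
      integral_ofReal.symm
    rw [h1]
    apply setIntegral_congr_fun measurableSet_Ioi
    intro r _
    show (starRingEnd ℂ) (phi m (x : ℝ → ℂ) r) * phi m (x : ℝ → ℂ) r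
        = ((‖phi m (x : ℝ → ℂ) r‖ ^ 2 : ℝ) : ℂ)
    rw [RCLike.conj_mul]
    push_cast
    norm_num
  -- the inner product space structure
  let core : InnerProductSpace.Core ℂ S :=
    { inner := fun x y =>
        ∫ r in Ioi (0:ℝ), (starRingEnd ℂ) (phi m (x : ℝ → ℂ) r) * phi m (y : ℝ → ℂ) r
      conj_inner_symm := by
        intro x y
        show (starRingEnd ℂ)
            (∫ r in Ioi (0:ℝ), (starRingEnd ℂ) (phi m (y : ℝ → ℂ) r) * phi m (x : ℝ → ℂ) r)
          = ∫ r in Ioi (0:ℝ), (starRingEnd ℂ) (phi m (x : ℝ → ℂ) r) * phi m (y : ℝ → ℂ) r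
        rw [← integral_conj]
        apply setIntegral_congr_fun measurableSet_Ioi
        intro r _
        show (starRingEnd ℂ) ((starRingEnd ℂ) (phi m (y : ℝ → ℂ) r) * phi m (x : ℝ → ℂ) r)
          = (starRingEnd ℂ) (phi m (x : ℝ → ℂ) r) * phi m (y : ℝ → ℂ) r
        rw [map_mul, Complex.conj_conj]
        ring
      re_inner_nonneg := by
        intro x
        show 0 ≤ RCLike.re
          (∫ r in Ioi (0:ℝ), (starRingEnd ℂ) (phi m (x : ℝ → ℂ) r) * phi m (x : ℝ → ℂ) r)
        rw [hinn_self x]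
        simpa using hT0 x
      definite := by
        intro x hx
        replace hx : (∫ r in Ioi (0:ℝ),
            (starRingEnd ℂ) (phi m (x : ℝ → ℂ) r) * phi m (x : ℝ → ℂ) r) = 0 := hx
        rw [hinn_self x] at hx
        have hTx : T x = 0 := by exact_mod_cast hx
        obtain ⟨a, b, ha, hab, hua⟩ := hbnd x
        have hzero : (x : ℝ → ℂ) = 0 := by
          funext r
          rcases lt_or_ge 0 r with hr | hr
          · have hb : ‖(x : ℝ → ℂ) r‖ ^ 2 ≤ r / (2 * m - 1) * T x :=
              pointwise_bound hm (hsm x) ha hab hua hr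
            rw [hTx, mul_zero] at hb
            have : ‖(x : ℝ → ℂ) r‖ = 0 := by nlinarith [sq_nonneg ‖(x : ℝ → ℂ) r‖]
            simpa using norm_eq_zero.mp this
          · have : r ∉ tsupport (x : ℝ → ℂ) := fun h => absurd ((hreg x x.2).2.2 h)
              (by simpa using hr)
            exact image_eq_zero_of_notMem_tsupport this
        exact (Submodule.coe_eq_zero).mp hzero
      add_left := by
        intro x y z
        show (∫ r in Ioi (0:ℝ), (starRingEnd ℂ) (phi m ((x + y : S) : ℝ → ℂ) r)
            * phi m (z : ℝ → ℂ) r)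
          = (∫ r in Ioi (0:ℝ), (starRingEnd ℂ) (phi m (x : ℝ → ℂ) r) * phi m (z : ℝ → ℂ) r)
            + ∫ r in Ioi (0:ℝ), (starRingEnd ℂ) (phi m (y : ℝ → ℂ) r) * phi m (z : ℝ → ℂ) r
        rw [← integral_add (hinnInt x z) (hinnInt y z)]
        apply setIntegral_congr_fun measurableSet_Ioi
        intro r _
        show (starRingEnd ℂ) (phi m ((x + y : S) : ℝ → ℂ) r) * phi m (z : ℝ → ℂ) r
          = (starRingEnd ℂ) (phi m (x : ℝ → ℂ) r) * phi m (z : ℝ → ℂ) r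
            + (starRingEnd ℂ) (phi m (y : ℝ → ℂ) r) * phi m (z : ℝ → ℂ) r
        rw [hphi_add x y r, map_add]
        ring
      smul_left := by
        intro x y c
        show (∫ r in Ioi (0:ℝ), (starRingEnd ℂ) (phi m ((c • x : S) : ℝ → ℂ) r)
            * phi m (y : ℝ → ℂ) r)
          = (starRingEnd ℂ) c
            * ∫ r in Ioi (0:ℝ), (starRingEnd ℂ) (phi m (x : ℝ → ℂ) r) * phi m (y : ℝ → ℂ) r
        rw [← integral_const_mul]
        apply setIntegral_congr_fun measurableSet_Ioi
        intro r _
        show (starRingEnd ℂ) (phi m ((c • x : S) : ℝ → ℂ) r) * phi m (y : ℝ → ℂ) r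
          = (starRingEnd ℂ) c
            * ((starRingEnd ℂ) (phi m (x : ℝ → ℂ) r) * phi m (y : ℝ → ℂ) r)
        rw [hphi_smul c x r]
        simp only [smul_eq_mul, map_mul]
        ring }
  letI : NormedAddCommGroup S := @InnerProductSpace.Core.toNormedAddCommGroup ℂ S _ _ _ core
  letI : InnerProductSpace ℂ S := InnerProductSpace.ofCore core.toCore
  set k := Module.finrank ℂ S with hk
  let bb : OrthonormalBasis (Fin k) ℂ S := stdOrthonormalBasis ℂ S
  have hinner_eq : ∀ x y : S, (inner ℂ x y : ℂ)
      = ∫ r in Ioi (0:ℝ), (starRingEnd ℂ) (phi m (x : ℝ → ℂ) r) * phi m (y : ℝ → ℂ) r :=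
    fun x y => rfl
  -- each basis vector has T = 1
  have hTb : ∀ i : Fin k, T (bb i) = 1 := by
    intro i
    have h1 : (inner ℂ (bb i) (bb i) : ℂ) = 1 := by
      have := orthonormal_iff_ite.mp bb.orthonormal i i
      simpa using this
    rw [hinner_eq, hinn_self] at h1
    exact_mod_cast h1
  -- kernel bound
  have hK : ∀ r : ℝ, 0 < r →
      (∑ i : Fin k, ‖(bb i : ℝ → ℂ) r‖ ^ 2) ≤ r / (2 * m - 1) := by
    intro r hr
    set K := ∑ i : Fin k, ‖(bb i : ℝ → ℂ) r‖ ^ 2 with hKdef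
    have hK0 : 0 ≤ K := Finset.sum_nonneg (fun i _ => sq_nonneg _)
    set l : Fin k → ℂ := fun i => (starRingEnd ℂ) ((bb i : ℝ → ℂ) r) with hl
    set w : S := ∑ i : Fin k, l i • bb i with hw
    have hinner_w : (inner ℂ w w : ℂ) = ((K : ℝ) : ℂ) := by
      rw [hw]
      rw [bb.orthonormal.inner_sum l l Finset.univ]
      rw [hKdef]
      push_cast
      apply Finset.sum_congr rfl
      intro i _
      rw [hl]
      simp only [Complex.conj_conj]
      rw [mul_comm, RCLike.conj_mul]
      push_cast
      norm_num
    have hTw : T w = K := by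
      have := hinner_w
      rw [hinner_eq, hinn_self] at this
      exact_mod_cast this
    have hwr : ((w : ℝ → ℂ)) r = ((K : ℝ) : ℂ) := by
      have hcoe : ((w : ℝ → ℂ)) = ∑ i : Fin k, l i • ((bb i : ℝ → ℂ)) := by
        rw [hw]
        push_cast
        rfl
      rw [hcoe]
      rw [Finset.sum_apply]
      rw [hKdef]
      push_cast
      apply Finset.sum_congr rfl
      intro i _
      simp only [Pi.smul_apply, hl, smul_eq_mul]
      rw [RCLike.conj_mul]
      push_cast
      norm_num
    obtain ⟨a, b, ha, hab, hua⟩ := hbnd w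
    have hpb : ‖((w : ℝ → ℂ)) r‖ ^ 2 ≤ r / (2 * m - 1) * T w :=
      pointwise_bound hm (hsm w) ha hab hua hr
    rw [hTw, hwr] at hpb
    have hKsq : K ^ 2 ≤ (r / (2 * m - 1)) * K := by
      have : ‖((K : ℝ) : ℂ)‖ ^ 2 = K ^ 2 := by
        rw [Complex.norm_real, Real.norm_eq_abs, _root_.abs_of_nonneg hK0]
      rwa [this] at hpb
    have hC0 : 0 ≤ r / (2 * m - 1) := div_nonneg hr.le h2m.le
    nlinarith
  -- each basis vector: 1 ≤ ∫ Wm ‖b i‖²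
  have hTle : ∀ i : Fin k,
      (1:ℝ) ≤ ∫ r in Ioi (0:ℝ), (max (-W r) 0) * ‖(bb i : ℝ → ℂ) r‖ ^ 2 := by
    intro i
    obtain ⟨a, b, ha, hab, hua⟩ := hbnd (bb i)
    have hne : ((bb i : ℝ → ℂ)) ≠ 0 := by
      intro h
      exact bb.orthonormal.ne_zero i ((Submodule.coe_eq_zero).mp h)
    have h2 : T (bb i) ≤ ∫ r in Ioi (0:ℝ), (max (-W r) 0) * ‖(bb i : ℝ → ℂ) r‖ ^ 2 :=
      form_bound hW hWmeas hm (hsm (bb i)) ha hab hua (hneg _ (bb i).2 hne)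
    rw [hTb i] at h2
    exact h2
  -- integrability of each term
  have hint_i : ∀ i : Fin k,
      IntegrableOn (fun r => (max (-W r) 0) * ‖(bb i : ℝ → ℂ) r‖ ^ 2) (Ioi 0) := by
    intro i
    obtain ⟨a, b, ha, hab, hua⟩ := hbnd (bb i)
    exact V_norm_integrable hW (hWmeas.neg.max measurable_const)
      (fun r => by
        show |max (-W r) 0| ≤ |W r|
        rw [_root_.abs_of_nonneg (le_max_right (-W r) 0)]
        rcases le_or_gt (W r) 0 with h | h
        · rw [max_eq_left (by linarith), abs_of_nonpos h]
        · rw [max_eq_right (by linarith)]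
          exact abs_nonneg _) hm (hsm (bb i)) ha hab hua
  -- sum up
  have hsum : (k : ℝ) ≤ ∑ i : Fin k,
      ∫ r in Ioi (0:ℝ), (max (-W r) 0) * ‖(bb i : ℝ → ℂ) r‖ ^ 2 := by
    calc (k : ℝ) = ∑ _i : Fin k, (1:ℝ) := by simp
      _ ≤ _ := Finset.sum_le_sum (fun i _ => hTle i)
  have hexch : ∑ i : Fin k, ∫ r in Ioi (0:ℝ), (max (-W r) 0) * ‖(bb i : ℝ → ℂ) r‖ ^ 2
      = ∫ r in Ioi (0:ℝ), (max (-W r) 0) * ∑ i : Fin k, ‖(bb i : ℝ → ℂ) r‖ ^ 2 := by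
    rw [← integral_finset_sum Finset.univ (fun i _ => hint_i i)]
    apply setIntegral_congr_fun measurableSet_Ioi
    intro r _
    show ∑ i : Fin k, (max (-W r) 0) * ‖(bb i : ℝ → ℂ) r‖ ^ 2
      = (max (-W r) 0) * ∑ i : Fin k, ‖(bb i : ℝ → ℂ) r‖ ^ 2
    rw [Finset.mul_sum]
  have hmono : ∫ r in Ioi (0:ℝ), (max (-W r) 0) * ∑ i : Fin k, ‖(bb i : ℝ → ℂ) r‖ ^ 2
      ≤ ∫ r in Ioi (0:ℝ), (2 * m - 1)⁻¹ * (r * max (-W r) 0) := by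
    apply setIntegral_mono_on
    · rw [show (fun r => (max (-W r) 0) * ∑ i : Fin k, ‖(bb i : ℝ → ℂ) r‖ ^ 2)
        = fun r => ∑ i : Fin k, (max (-W r) 0) * ‖(bb i : ℝ → ℂ) r‖ ^ 2 by
          funext r; rw [Finset.mul_sum]]
      exact integrable_finset_sum Finset.univ (fun i _ => hint_i i)
    · exact hWneg.const_mul _
    · exact measurableSet_Ioi
    · intro r hr
      have hr0 : (0:ℝ) < r := hr
      have := hK r hr0
      calc (max (-W r) 0) * ∑ i : Fin k, ‖(bb i : ℝ → ℂ) r‖ ^ 2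
          ≤ (max (-W r) 0) * (r / (2 * m - 1)) :=
            mul_le_mul_of_nonneg_left this (le_max_right _ _)
        _ = (2 * m - 1)⁻¹ * (r * max (-W r) 0) := by
            field_simp
  have hfinal : ∫ r in Ioi (0:ℝ), (2 * m - 1)⁻¹ * (r * max (-W r) 0)
      ≤ (2 * m - 1)⁻¹ * ∫ r in Ioi (0:ℝ), r * |W r| := by
    rw [integral_const_mul]
    apply mul_le_mul_of_nonneg_left ?_ (inv_nonneg.mpr h2m.le)
    apply setIntegral_mono_on hWneg hW measurableSet_Ioi
    intro r hr
    have hr0 : (0:ℝ) < r := hr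
    apply mul_le_mul_of_nonneg_left ?_ hr0.le
    rcases le_or_gt (W r) 0 with h | h
    · rw [max_eq_left (by linarith), abs_of_nonpos h]
    · rw [max_eq_right (by linarith)]
      exact abs_nonneg _
  calc (k : ℝ) ≤ _ := hsum
    _ = _ := hexch
    _ ≤ _ := hmono
    _ ≤ _ := hfinal
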